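/- arXiv:2510.10399 — 3 statements merged into one kernel-verified Lean document; each statement's English description precedes it below -/
import Mathlib

section
/- Conversely, if a set of arcs on N ∪ {d} (with depot d) forms a single directed Hamiltonian cycle through the depot d and all nodes of N, then there exists an assignment u : N → ℝ≥0 with u(i) ≤ |N| − 1 for all i, satisfying the MTZ inequalities u(i) − u(j) + |N|·z(i,j) ≤ |N| − 1 for all i, j ∈ N. -/
/-!
Take `u i` to be the position of `i` on the route. Positions lie in `[0, n - 1]`, which gives
the MTZ inequality for every pair not joined by an arc; along an arc `i → j` of the route the
position increases by exactly one, so the inequality holds there with equality.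
-/

section routePosition

variable {N : Type*} {n : ℕ} (v : Fin n ≃ N)

def routePosition (i : N) : ℝ := (v.symm i : ℕ)

lemma routePosition_nonneg (i : N) : 0 ≤ routePosition v i := Nat.cast_nonneg _

lemma routePosition_le (i : N) : routePosition v i ≤ n - 1 := by
  have hlt : (v.symm i : ℕ) + 1 ≤ n := (v.symm i).isLt
  rw [routePosition, le_sub_iff_add_le]
  exact_mod_cast hlt

lemma routePosition_succ {t : ℕ} (ht : t + 1 < n) :
    routePosition v (v ⟨t + 1, ht⟩) = routePosition v (v ⟨t, Nat.lt_of_succ_lt ht⟩) + 1 := by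
  simp [routePosition]

end routePosition

lemma mtz_inequality_of_arc_indicator {n ui uj zij : ℝ} (hi : ui ≤ n - 1) (hj : 0 ≤ uj)
    (hz : zij = 0 ∨ zij = 1 ∧ uj = ui + 1) : ui - uj + n * zij ≤ n - 1 := by
  rcases hz with hz | ⟨hz, hsucc⟩
  · rw [hz]; linarith
  · rw [hz, hsucc]; linarith

theorem hamiltonian_cycle_satisfies_mtz_general {N : Type*}
    (n : ℕ)
    (v : Fin n ≃ N) (z : N → N → ℕ)
    (hz : ∀ i j : N, z i j = 1 ↔
      ∃ (t : ℕ) (ht : t + 1 < n), v ⟨t, Nat.lt_of_succ_lt ht⟩ = i ∧ v ⟨t + 1, ht⟩ = j)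
    (hz01 : ∀ i j, z i j = 0 ∨ z i j = 1) :
    ∃ u : N → ℝ, (∀ i, 0 ≤ u i) ∧ (∀ i, u i ≤ (n : ℝ) - 1) ∧
      ∀ i j, u i - u j + (n : ℝ) * (z i j : ℝ) ≤ (n : ℝ) - 1 := by
  refine ⟨routePosition v, routePosition_nonneg v, routePosition_le v, fun i j => ?_⟩
  refine mtz_inequality_of_arc_indicator (routePosition_le v i) (routePosition_nonneg v j) ?_
  rcases hz01 i j with h0 | h1
  · left; exact_mod_cast h0
  · obtain ⟨t, ht, rfl, rfl⟩ := (hz i j).1 h1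
    exact Or.inr ⟨by exact_mod_cast h1, routePosition_succ v ht⟩

/-- If the arcs `z` form the Hamiltonian cycle `d → v 0 → v 1 → ⋯ → v (n-1) → d`
through depot `d` and all nodes of `N` (`v : Fin n ≃ N` enumerates the route),
then there are nonnegative position variables `u` with `u i ≤ n - 1` satisfying the
MTZ inequalities `u i - u j + n * z i j ≤ n - 1` for all `i j ∈ N` (depot excluded). -/
theorem hamiltonian_cycle_satisfies_mtz {N : Type*} [Fintype N]
    (n : ℕ) (hn : n = Fintype.card N) (hn1 : 1 ≤ n)
    (v : Fin n ≃ N) (z : N → N → ℕ)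
    (hz : ∀ i j : N, z i j = 1 ↔
      ∃ (t : ℕ) (ht : t + 1 < n), v ⟨t, Nat.lt_of_succ_lt ht⟩ = i ∧ v ⟨t + 1, ht⟩ = j)
    (hz01 : ∀ i j, z i j = 0 ∨ z i j = 1) :
    ∃ u : N → ℝ, (∀ i, 0 ≤ u i) ∧ (∀ i, u i ≤ (n : ℝ) - 1) ∧
      ∀ i j, u i - u j + (n : ℝ) * (z i j : ℝ) ≤ (n : ℝ) - 1 :=
  hamiltonian_cycle_satisfies_mtz_general n v z hz hz01
end

section
/- Suppose z : N ∪ D × N ∪ D → {0,1} satisfies flow conservation at every node j ∈ N (in-degree equals out-degree under z), every node i ∈ N has exactly one outgoing and one incoming arc, and there are no subtours contained entirely in N. Then every node of N lies on a directed path that starts and ends at depot nodes in D. -/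
/-!
From `x`, follow outgoing arcs forward and incoming arcs backward, one arc per node of `N`.
Inside the finite set `N` either walk would eventually revisit a node and so close a cycle
in `N`, which is excluded; hence both walks leave `N`, i.e. reach a depot, and gluing the
backward walk to the forward one gives a depot-to-depot path through `x`.
-/

open Function

theorem Finset.exists_eq_one_of_sum_eq_one {ι : Type*} {s : Finset ι} {f : ι → ℕ}
    (h : ∑ i ∈ s, f i = 1) : ∃ i ∈ s, f i = 1 := by
  obtain ⟨i, hi, hne⟩ := Finset.exists_ne_zero_of_sum_ne_zero (h ▸ one_ne_zero)
  exact ⟨i, hi, le_antisymm (h ▸ Finset.single_le_sum (fun _ _ => Nat.zero_le _) hi)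
    (Nat.one_le_iff_ne_zero.2 hne)⟩

theorem Function.exists_isPeriodicPt_iterate {α : Type*} [Finite α] (f : α → α) (x : α) :
    ∃ a k, 0 < k ∧ IsPeriodicPt f k (f^[a] x) := by
  obtain ⟨a, b, hab, heq⟩ :=
    Set.finite_univ.exists_lt_map_eq_of_forall_mem (t := Set.univ) (f := fun n => f^[n] x) fun _ => trivial
  refine ⟨a, b - a, Nat.sub_pos_of_lt hab, ?_⟩
  rw [IsPeriodicPt, IsFixedPt, ← iterate_add_apply, Nat.sub_add_cancel hab.le]
  exact heq.symm

theorem Function.IsPeriodicPt.iterate_val_add_one {α : Type*} {f : α → α} {k : ℕ} [NeZero k]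
    {y : α} (h : IsPeriodicPt f k y) (t : ZMod k) : f (f^[t.val] y) = f^[(t + 1).val] y := by
  rw [← iterate_succ_apply' f, ← h.iterate_mod_apply, ← ZMod.val_natCast, Nat.cast_succ,
    ZMod.natCast_zmod_val]

section Paths

variable {V : Type*} {R : V → V → Prop} {S : Set V}

def IsCycleFreeOn (R : V → V → Prop) (S : Set V) : Prop :=
  ∀ k, 1 ≤ k → ∀ w : ZMod k → V, (∀ t, w t ∈ S) → ¬ ∀ t, R (w t) (w (t + 1))

theorem IsCycleFreeOn.flip (h : IsCycleFreeOn R S) : IsCycleFreeOn (flip R) S := by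
  intro k hk w hw hcyc
  refine h k hk (fun t => w (-t)) (fun t => hw _) fun t => ?_
  simpa only [Function.flip_def, show -(t + 1) + 1 = -t by ring] using hcyc (-(t + 1))

theorem IsCycleFreeOn.exists_iterate_not_mem [Finite V] (h : IsCycleFreeOn R S) {f : V → V}
    (hf : ∀ v ∈ S, R v (f v)) (x : V) : ∃ n, f^[n] x ∉ S := by
  by_contra! hS
  obtain ⟨a, k, hk, hper⟩ := exists_isPeriodicPt_iterate f x
  have : NeZero k := ⟨hk.ne'⟩
  have hw (t : ZMod k) : f^[t.val] (f^[a] x) ∈ S := by rw [← iterate_add_apply]; exact hS _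
  exact h k hk _ hw fun t => hper.iterate_val_add_one t ▸ hf _ (hw t)

theorem IsCycleFreeOn.exists_first_exit [Finite V] (h : IsCycleFreeOn R S) {f : V → V}
    (hf : ∀ v ∈ S, R v (f v)) {x : V} (hx : x ∈ S) :
    ∃ a, 0 < a ∧ f^[a] x ∉ S ∧ ∀ i < a, f^[i] x ∈ S := by
  classical
  have hex := h.exists_iterate_not_mem hf x
  refine ⟨Nat.find hex, Nat.pos_of_ne_zero fun h0 => ?_, Nat.find_spec hex,
    fun i hi => not_not.1 (Nat.find_min hex hi)⟩
  exact Nat.find_spec hex (h0 ▸ hx)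

def backForthWalk (f g : V → V) (b : ℕ) (x : V) (i : ℕ) : V :=
  if i ≤ b then g^[b - i] x else f^[i - b] x

variable {f g : V → V} {b i : ℕ} {x : V}

theorem backForthWalk_of_le (hi : i ≤ b) : backForthWalk f g b x i = g^[b - i] x :=
  if_pos hi

theorem backForthWalk_of_ge (hi : b ≤ i) : backForthWalk f g b x i = f^[i - b] x := by
  rcases hi.eq_or_lt with rfl | hlt
  · simp [backForthWalk]
  · exact if_neg hlt.not_ge

theorem backForthWalk_of_lt (hi : i < b) :
    backForthWalk f g b x i = g (backForthWalk f g b x (i + 1)) := by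
  rw [backForthWalk_of_le hi.le, backForthWalk_of_le hi, ← iterate_succ_apply' g]
  congr 2
  omega

theorem backForthWalk_succ_of_ge (hi : b ≤ i) :
    backForthWalk f g b x (i + 1) = f (backForthWalk f g b x i) := by
  rw [backForthWalk_of_ge hi, backForthWalk_of_ge (hi.trans i.le_succ), ← iterate_succ_apply' f]
  congr 2
  omega

theorem IsCycleFreeOn.exists_walk_through [Finite V] (h : IsCycleFreeOn R S)
    (hsucc : ∀ v ∈ S, ∃ w, R v w) (hpred : ∀ v ∈ S, ∃ u, R u v) (hx : x ∈ S) :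
    ∃ (n : ℕ) (r : ℕ → V), r 0 ∉ S ∧ r n ∉ S ∧ (∀ i, 0 < i → i < n → r i ∈ S) ∧
      (∃ i, 0 < i ∧ i < n ∧ r i = x) ∧ ∀ i < n, R (r i) (r (i + 1)) := by
  have : Nonempty V := ⟨x⟩
  choose! f hf using hsucc
  choose! g hg using hpred
  obtain ⟨a, ha, hfa, hfS⟩ := h.exists_first_exit hf hx
  obtain ⟨b, hb, hgb, hgS⟩ := h.flip.exists_first_exit (f := g) hg hx
  have hmem : ∀ i, 0 < i → i < b + a → backForthWalk f g b x i ∈ S := by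
    intro i hi0 hi
    rcases le_total i b with hib | hbi
    · exact backForthWalk_of_le hib ▸ hgS _ (by omega)
    · exact backForthWalk_of_ge hbi ▸ hfS _ (by omega)
  refine ⟨b + a, backForthWalk f g b x, ?_, ?_, hmem, ⟨b, hb, by omega, ?_⟩, fun i hi => ?_⟩
  · rwa [backForthWalk_of_le b.zero_le]
  · rwa [backForthWalk_of_ge (b.le_add_right a), Nat.add_sub_cancel_left]
  · rw [backForthWalk_of_le le_rfl, Nat.sub_self, iterate_zero_apply]
  · rcases lt_or_ge i b with hib | hbi
    · rw [backForthWalk_of_lt hib]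
      exact hg _ (hmem _ (by omega) (by omega))
    · rw [backForthWalk_succ_of_ge hbi]
      exact hf _ (backForthWalk_of_ge hbi ▸ hfS _ (by omega))

end Paths

theorem exists_fin_path_of_nat_path {V : Type*} {R : V → V → Prop} {A B : Set V} {x : V}
    {n : ℕ} (r : ℕ → V) (h0 : r 0 ∈ A) (hn : r n ∈ A) (hmid : ∀ i, 0 < i → i < n → r i ∈ B)
    (hx : ∃ i, 0 < i ∧ i < n ∧ r i = x) (hR : ∀ i < n, R (r i) (r (i + 1))) :
    ∃ (m : ℕ) (p : Fin (m + 2) → V),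
      p 0 ∈ A ∧ p (Fin.last (m + 1)) ∈ A ∧
      (∀ t : Fin (m + 2), t ≠ 0 → t ≠ Fin.last (m + 1) → p t ∈ B) ∧
      (∃ t : Fin (m + 2), t ≠ 0 ∧ t ≠ Fin.last (m + 1) ∧ p t = x) ∧
      (∀ t : Fin (m + 1), R (p t.castSucc) (p t.succ)) := by
  obtain ⟨i, hi0, hin, hix⟩ := hx
  obtain ⟨m, rfl⟩ : ∃ m, n = m + 1 := ⟨n - 1, by omega⟩
  refine ⟨m, fun t => r t, h0, hn, fun t ht0 htl => hmid _ ?_ ?_, ⟨⟨i, by omega⟩, ?_, ?_, hix⟩,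
    fun t => hR _ t.isLt⟩
  · exact Nat.pos_of_ne_zero (Fin.val_ne_zero_iff.2 ht0)
  · exact Fin.val_lt_last htl
  · exact Fin.ne_of_val_ne hi0.ne'
  · exact Fin.ne_of_val_ne hin.ne

theorem damaged_nodes_on_depot_paths_general {V : Type*} [Fintype V] [DecidableEq V]
    (N D : Finset V) (hcover : N ∪ D = Finset.univ)
    (z : V → V → ℕ)
    (hout : ∀ i ∈ N, (∑ j, z i j) = 1)
    (hin : ∀ i ∈ N, (∑ j, z j i) = 1)
    (hnosub : ∀ (k : ℕ), 1 ≤ k → ∀ w : ZMod k → V, (∀ t, w t ∈ N) →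
      ¬ (∀ t : ZMod k, z (w t) (w (t + 1)) = 1)) :
    ∀ x ∈ N, ∃ (m : ℕ) (p : Fin (m + 2) → V),
      p 0 ∈ D ∧ p (Fin.last (m + 1)) ∈ D ∧
      (∀ t : Fin (m + 2), t ≠ 0 → t ≠ Fin.last (m + 1) → p t ∈ N) ∧
      (∃ t : Fin (m + 2), t ≠ 0 ∧ t ≠ Fin.last (m + 1) ∧ p t = x) ∧
      (∀ t : Fin (m + 1), z (p t.castSucc) (p t.succ) = 1) := by
  intro x hx
  have hD : ∀ v ∉ N, v ∈ D := fun v hv =>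
    (Finset.mem_union.1 (hcover ▸ Finset.mem_univ v)).resolve_left hv
  have hcyc : IsCycleFreeOn (fun i j => z i j = 1) (N : Set V) := hnosub
  obtain ⟨n, r, h0, hn, hmid, hxr, hR⟩ := hcyc.exists_walk_through
    (fun v hv => (Finset.exists_eq_one_of_sum_eq_one (hout v hv)).imp fun _ => And.right)
    (fun v hv => (Finset.exists_eq_one_of_sum_eq_one (hin v hv)).imp fun _ => And.right) hx
  exact exists_fin_path_of_nat_path (R := fun i j => z i j = 1) r (hD _ h0) (hD _ hn) hmid hxr hR

/-- If `z` satisfies flow conservation at every damaged node, every damaged node has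
exactly one incoming and one outgoing arc, and there is no directed cycle lying
entirely within the damaged-node set `N`, then every damaged node lies on a directed
path that starts and ends at depot nodes in `D`. -/
theorem damaged_nodes_on_depot_paths {V : Type*} [Fintype V] [DecidableEq V]
    (N D : Finset V) (hdisj : Disjoint N D) (hcover : N ∪ D = Finset.univ)
    (z : V → V → ℕ) (hz01 : ∀ i j, z i j = 0 ∨ z i j = 1)
    (hflow : ∀ j ∈ N, (∑ i, z i j) = ∑ i, z j i)
    (hout : ∀ i ∈ N, (∑ j, z i j) = 1)
    (hin : ∀ i ∈ N, (∑ j, z j i) = 1)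
    (hnosub : ∀ (k : ℕ), 1 ≤ k → ∀ w : ZMod k → V, (∀ t, w t ∈ N) →
      ¬ (∀ t : ZMod k, z (w t) (w (t + 1)) = 1)) :
    ∀ x ∈ N, ∃ (m : ℕ) (p : Fin (m + 2) → V),
      p 0 ∈ D ∧ p (Fin.last (m + 1)) ∈ D ∧
      (∀ t : Fin (m + 2), t ≠ 0 → t ≠ Fin.last (m + 1) → p t ∈ N) ∧
      (∃ t : Fin (m + 2), t ≠ 0 ∧ t ≠ Fin.last (m + 1) ∧ p t = x) ∧
      (∀ t : Fin (m + 1), z (p t.castSucc) (p t.succ) = 1) :=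
  damaged_nodes_on_depot_paths_general N D hcover z hout hin hnosub
end

section
/- Under the degree constraints (each node has unique successor and predecessor) together with the MTZ constraints on N, every directed cycle of the successor permutation contains at least one depot node from D. -/
/-!
The MTZ constraint on an arc `i → j` inside `N` reads `u j ≥ u i + 1`, so along any
stretch of a `σ`-orbit that stays in `N` the potential `u` strictly increases. An orbit
staying in `N` forever would therefore visit infinitely many distinct nodes of the finite
set `N`, which is impossible.
-/

theorem Function.exists_iterate_notMem_of_lt_potential {α β : Type*} [Preorder β]
    {f : α → α} {s : Set α} (hs : s.Finite) (φ : α → β)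
    (hφ : ∀ x ∈ s, f x ∈ s → φ x < φ (f x)) (x : α) : ∃ k, f^[k] x ∉ s := by
  by_contra! hmem
  have hmono : StrictMono fun k => φ (f^[k] x) := strictMono_nat_of_lt_succ fun k => by
    have hnext := hmem (k + 1)
    rw [Function.iterate_succ_apply'] at hnext ⊢
    exact hφ _ (hmem k) hnext
  have hinj : Function.Injective fun k => f^[k] x := fun a b hab =>
    hmono.injective (congrArg φ hab)
  exact Set.infinite_of_injective_forall_mem hinj hmem hs

theorem every_cycle_meets_depot_general {N D : Type*} [Fintype N]
    (σ : Equiv.Perm (N ⊕ D)) (z : (N ⊕ D) → (N ⊕ D) → ℕ)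
    (hz : ∀ i j, z i j = 1 ↔ σ i = j)
    (u : N → ℝ)
    (hmtz : ∀ i j : N, u i - u j + (Fintype.card N : ℝ) * (z (Sum.inl i) (Sum.inl j) : ℝ)
      ≤ (Fintype.card N : ℝ) - 1) :
    ∀ i : N ⊕ D, ∃ (k : ℕ) (d : D), (⇑σ)^[k] i = Sum.inr d := by
  intro i
  have hstep : ∀ a b : N, σ (Sum.inl a) = Sum.inl b → u a < u b := fun a b hab => by
    have h := hmtz a b
    rw [(hz _ _).mpr hab, Nat.cast_one, mul_one] at h
    linarith
  obtain ⟨k, hk⟩ := Function.exists_iterate_notMem_of_lt_potential (f := σ)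
    (Set.finite_range Sum.inl) (Sum.elim u 0) (by rintro _ ⟨a, rfl⟩ ⟨b, hb⟩; rw [← hb]; exact hstep a b hb.symm) i
  cases h : (⇑σ)^[k] i with
  | inl a => exact absurd ⟨a, h.symm⟩ hk
  | inr d => exact ⟨k, d, h⟩

/-- Under the degree constraints (the arcs `z` form a permutation `σ` of `V = N ⊕ D`)
together with the MTZ constraints on `N`, every directed cycle of the successor
permutation contains at least one depot node: for every starting point, some iterate
of `σ` lands in `D`. -/
theorem every_cycle_meets_depot {N D : Type*} [Fintype N] [Fintype D] [Nonempty D]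
    (σ : Equiv.Perm (N ⊕ D)) (z : (N ⊕ D) → (N ⊕ D) → ℕ)
    (hz : ∀ i j, z i j = 1 ↔ σ i = j)
    (u : N → ℝ) (hu : ∀ i, 0 ≤ u i)
    (hmtz : ∀ i j : N, u i - u j + (Fintype.card N : ℝ) * (z (Sum.inl i) (Sum.inl j) : ℝ)
      ≤ (Fintype.card N : ℝ) - 1) :
    ∀ i : N ⊕ D, ∃ (k : ℕ) (d : D), (⇑σ)^[k] i = Sum.inr d :=
  every_cycle_meets_depot_general σ z hz u hmtz
end
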